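/- Let q ≥ 3 be an integer and let x₂, x₃ be real numbers. Then for every E ∈ ℂ: det(E·I − H_q(x₂,x₃)) = det(E·I − H_q(0,0)) + 4 − 2cos(2πx₂) − 2cos(2πx₃). Consequently, E is an eigenvalue of H_q(x₂,x₃) if and only if det(E·I − H_q(0,0)) + 4 = 2cos(2πx₂) + 2cos(2πx₃). -/

import Mathlib

open Real

/-- The Floquet–Bloch reduction `H_q(x₂,x₃)` of the Harper operator at flux `θ = 2π/q` with
quasimomenta `(x₂,x₃)`: the `q×q` Hermitian matrix with diagonal entries
`2cos(2π(x₂+k)/q)`, entries `e^{2πix₃/q}` where the row index equals the column index plus one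
mod `q` (subdiagonal plus the `(0,q−1)` corner), entries `e^{−2πix₃/q}` where the column index
equals the row index plus one mod `q`, and zeros elsewhere. -/
noncomputable def harperMatrix (q : ℕ) (x₂ x₃ : ℝ) : Matrix (Fin q) (Fin q) ℂ :=
  fun k l =>
    if k = l then ((2 * Real.cos (2 * π * (x₂ + (k : ℕ)) / q) : ℝ) : ℂ)
    else if (k : ℕ) = ((l : ℕ) + 1) % q then Complex.exp (2 * (π : ℂ) * Complex.I * (x₃ : ℂ) / (q : ℂ))
    else if (l : ℕ) = ((k : ℕ) + 1) % q then Complex.exp (-(2 * (π : ℂ) * Complex.I * (x₃ : ℂ) / (q : ℂ)))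
    else 0

namespace HarperAux

open Polynomial Matrix

lemma fin_shift_iff {q : ℕ} (hq : 3 ≤ q) (k l : Fin q) :
    (k : ℕ) = ((l : ℕ) + 1) % q ↔ k = finRotate q l := by
  obtain ⟨n, rfl⟩ : ∃ n, q = n + 1 := ⟨q - 1, by omega⟩
  rw [finRotate_succ_apply, Fin.ext_iff, Fin.val_add]
  have h1 : ((1 : Fin (n+1)) : ℕ) = 1 := by
    rw [Fin.val_one']
    exact Nat.mod_eq_of_lt (by omega)
  rw [h1]

lemma harper_apply {q : ℕ} (hq : 3 ≤ q) (x₂ x₃ : ℝ) (k l : Fin q) :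
    harperMatrix q x₂ x₃ k l =
      if k = l then ((2 * Real.cos (2 * π * (x₂ + (k : ℕ)) / q) : ℝ) : ℂ)
      else if k = finRotate q l then Complex.exp (2 * (π : ℂ) * Complex.I * (x₃ : ℂ) / (q : ℂ))
      else if l = finRotate q k then Complex.exp (-(2 * (π : ℂ) * Complex.I * (x₃ : ℂ) / (q : ℂ)))
      else 0 := by
  unfold harperMatrix
  simp only [fin_shift_iff hq]

lemma rot_ne_self {q : ℕ} (hq : 3 ≤ q) (k : Fin q) : finRotate q k ≠ k := by
  obtain ⟨n, rfl⟩ : ∃ n, q = n + 1 := ⟨q - 1, by omega⟩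
  rw [finRotate_succ_apply]
  intro h
  have := congrArg Fin.val h
  rw [Fin.val_add] at this
  have h1 : ((1 : Fin (n+1)) : ℕ) = 1 := by
    rw [Fin.val_one']; exact Nat.mod_eq_of_lt (by omega)
  rw [h1] at this
  have hk := k.isLt
  rcases Nat.lt_or_ge ((k:ℕ) + 1) (n+1) with h2 | h2
  · rw [Nat.mod_eq_of_lt h2] at this; omega
  · have : ((k:ℕ) + 1) % (n+1) = 0 := by
      have : (k:ℕ) + 1 = n + 1 := by omega
      rw [this, Nat.mod_self]
    omega

lemma rot_rot_ne {q : ℕ} (hq : 3 ≤ q) (k : Fin q) : finRotate q (finRotate q k) ≠ k := by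
  obtain ⟨n, rfl⟩ : ∃ n, q = n + 1 := ⟨q - 1, by omega⟩
  rw [finRotate_succ_apply, finRotate_succ_apply]
  intro h
  have := congrArg Fin.val h
  rw [Fin.val_add, Fin.val_add] at this
  have h1 : ((1 : Fin (n+1)) : ℕ) = 1 := by
    rw [Fin.val_one']; exact Nat.mod_eq_of_lt (by omega)
  rw [h1] at this
  have hk := k.isLt
  rcases Nat.lt_or_ge ((k:ℕ) + 1) (n+1) with h2 | h2
  · rw [Nat.mod_eq_of_lt h2] at this
    rcases Nat.lt_or_ge ((k:ℕ) + 2) (n+1) with h3 | h3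
    · rw [Nat.mod_eq_of_lt h3] at this; omega
    · have h4 : (k:ℕ) + 1 + 1 = n + 1 := by omega
      rw [h4, Nat.mod_self] at this; omega
  · have h4 : (k:ℕ) + 1 = n + 1 := by omega
    rw [h4, Nat.mod_self] at this
    simp at this
    rw [Nat.mod_eq_of_lt (by omega)] at this
    omega

lemma coeff_comp_C_mul_X (p : ℂ[X]) (a : ℂ) (m : ℕ) :
    (p.comp (C a * X)).coeff m = a ^ m * p.coeff m := by
  induction p using Polynomial.induction_on' with
  | add p q hp hq => simp [add_comp, hp, hq, mul_add]
  | monomial n b =>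
    rw [monomial_comp, mul_pow, ← C_pow, mul_left_comm, coeff_C_mul, coeff_monomial,
      coeff_C_mul, coeff_X_pow]
    rcases eq_or_ne n m with h | h
    · subst h; simp
    · simp [h, Ne.symm h]

lemma exp_roots_infinite {q : ℕ} (hq : 0 < q) (p : ℂ[X])
    (h : ∀ x : ℝ, p.eval (Complex.exp (2 * (π:ℂ) * Complex.I * (x:ℂ) / (q:ℂ))) = 0) : p = 0 := by
  have h2πI : (2 * (π:ℂ) * Complex.I) ≠ 0 := by
    simp [Real.pi_ne_zero, Complex.I_ne_zero]
  apply p.eq_zero_of_infinite_isRoot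
  apply Set.infinite_of_injective_forall_mem
    (f := fun n : ℕ => Complex.exp (2 * (π:ℂ) * Complex.I / ((n:ℂ) + 1)))
  · intro n m hnm
    simp only at hnm
    rw [Complex.exp_eq_exp_iff_exists_int] at hnm
    obtain ⟨k, hk⟩ := hnm
    have hn1 : ((n:ℂ) + 1) ≠ 0 := Nat.cast_add_one_ne_zero n
    have hm1 : ((m:ℂ) + 1) ≠ 0 := Nat.cast_add_one_ne_zero m
    have hkey : (((n:ℂ))+1)⁻¹ = ((m:ℂ)+1)⁻¹ + (k:ℂ) := by
      apply mul_left_cancel₀ h2πI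
      rw [mul_add]
      calc 2 * (π:ℂ) * Complex.I * ((n:ℂ)+1)⁻¹
          = 2 * (π:ℂ) * Complex.I / ((n:ℂ)+1) := by rw [div_eq_mul_inv]
        _ = 2 * (π:ℂ) * Complex.I / ((m:ℂ)+1) + (k:ℂ) * (2 * (π:ℂ) * Complex.I) := hk
        _ = _ := by rw [div_eq_mul_inv]; ring
    have hkeyR : (((n:ℝ))+1)⁻¹ = ((m:ℝ)+1)⁻¹ + (k:ℝ) := by
      have : ((((n:ℝ)+1)⁻¹ : ℝ) : ℂ) = (((((m:ℝ)+1)⁻¹ + (k:ℝ)) : ℝ) : ℂ) := by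
        push_cast
        exact hkey
      exact_mod_cast this
    have hn0 : (0:ℝ) < ((n:ℝ)+1)⁻¹ := by positivity
    have hm0 : (0:ℝ) < ((m:ℝ)+1)⁻¹ := by positivity
    have hn2 : ((n:ℝ)+1)⁻¹ ≤ 1 := by
      rw [inv_le_one_iff₀]; right; linarith [Nat.cast_nonneg (α := ℝ) n]
    have hm2 : ((m:ℝ)+1)⁻¹ ≤ 1 := by
      rw [inv_le_one_iff₀]; right; linarith [Nat.cast_nonneg (α := ℝ) m]
    have hk0 : k = 0 := by
      have h1 : (k:ℝ) < 1 := by linarith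
      have h2 : (-1:ℝ) < (k:ℝ) := by linarith
      have h1' : k < 1 := by exact_mod_cast h1
      have h2' : -1 < k := by exact_mod_cast h2
      omega
    rw [hk0] at hkeyR
    rw [Int.cast_zero, add_zero] at hkeyR
    have : ((n:ℝ)+1) = ((m:ℝ)+1) := inv_injective hkeyR
    have : (n:ℝ) = (m:ℝ) := by linarith
    exact_mod_cast this
  · intro n
    simp only [Set.mem_setOf_eq, IsRoot.def]
    have := h ((q : ℝ) / ((n:ℝ) + 1))
    have hq0 : (q:ℂ) ≠ 0 := by exact_mod_cast hq.ne'
    have hn1 : ((n:ℂ) + 1) ≠ 0 := Nat.cast_add_one_ne_zero n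
    have harg : 2 * (π:ℂ) * Complex.I * (((q : ℝ) / ((n:ℝ) + 1) : ℝ) : ℂ) / (q:ℂ)
        = 2 * (π:ℂ) * Complex.I / ((n:ℂ) + 1) := by
      push_cast
      field_simp
    rw [harg] at this
    exact this

lemma key_const {q : ℕ} (hq : 0 < q) (f : ℝ → ℂ) (p : ℂ[X])
    (hdeg : p.natDegree ≤ 2 * q) (h0 : p.coeff 0 = 0) (h2q : p.coeff (2 * q) = 0)
    (heval : ∀ x : ℝ, p.eval (Complex.exp (2 * (π:ℂ) * Complex.I * (x:ℂ) / (q:ℂ)))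
      = Complex.exp (2 * (π:ℂ) * Complex.I * (x:ℂ) / (q:ℂ)) ^ q * f x)
    (hper : ∀ x : ℝ, f (x + 1) = f x) :
    ∀ x : ℝ, f x = f 0 := by
  set ζ : ℂ := Complex.exp (2 * (π:ℂ) * Complex.I / (q:ℂ)) with hζdef
  have hζ : IsPrimitiveRoot ζ q := Complex.isPrimitiveRoot_exp q hq.ne'
  have hζq : ζ ^ q = 1 := hζ.pow_eq_one
  have hqC : (q:ℂ) ≠ 0 := by exact_mod_cast hq.ne'
  have he_add : ∀ x : ℝ, Complex.exp (2 * (π:ℂ) * Complex.I * ((x:ℂ)+1) / (q:ℂ))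
      = ζ * Complex.exp (2 * (π:ℂ) * Complex.I * (x:ℂ) / (q:ℂ)) := by
    intro x
    rw [hζdef, ← Complex.exp_add]
    congr 1
    ring
  have hcomp : p.comp (C ζ * X) - p = 0 := by
    apply exp_roots_infinite hq
    intro x
    rw [eval_sub, eval_comp, eval_mul, eval_C, eval_X]
    have h1 : ζ * Complex.exp (2 * (π:ℂ) * Complex.I * (x:ℂ) / (q:ℂ))
        = Complex.exp (2 * (π:ℂ) * Complex.I * ((x:ℝ)+1 : ℝ) / (q:ℂ)) := by
      rw [← he_add x]; push_cast; ring_nf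
    rw [h1, heval ((x:ℝ)+1), heval x, hper x]
    have h2 : Complex.exp (2 * (π:ℂ) * Complex.I * (((x:ℝ)+1 : ℝ):ℂ) / (q:ℂ)) ^ q
        = Complex.exp (2 * (π:ℂ) * Complex.I * (x:ℂ) / (q:ℂ)) ^ q := by
      have h3 : ((((x:ℝ)+1 : ℝ)):ℂ) = (x:ℂ) + 1 := by push_cast; ring
      rw [h3, he_add x, mul_pow, hζq, one_mul]
    rw [h2, sub_self]
  have hpc : p.comp (C ζ * X) = p := sub_eq_zero.mp hcomp
  have hco : ∀ m : ℕ, ζ ^ m * p.coeff m = p.coeff m := by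
    intro m
    conv_rhs => rw [← hpc]
    rw [coeff_comp_C_mul_X]
  have hcm : ∀ m : ℕ, m ≠ q → p.coeff m = 0 := by
    intro m hm
    by_contra hne
    have h1 : ζ ^ m = 1 := by
      have h2 : (ζ ^ m - 1) * p.coeff m = 0 := by linear_combination hco m
      rcases mul_eq_zero.mp h2 with h3 | h3
      · exact sub_eq_zero.mp h3
      · exact absurd h3 hne
    have hdvd : q ∣ m := (hζ.pow_eq_one_iff_dvd m).mp h1
    obtain ⟨c, rfl⟩ := hdvd
    match c with
    | 0 => exact hne (by simpa using h0)
    | 1 => exact hm (by omega)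
    | (c+2) =>
      have hge : 2 * q ≤ q * (c + 2) := by
        calc 2 * q ≤ q * c + q * 2 := by omega
          _ = q * (c + 2) := by ring
      rcases eq_or_lt_of_le hge with heq | hlt
      · exact hne (heq ▸ h2q)
      · exact hne (coeff_eq_zero_of_natDegree_lt (lt_of_le_of_lt hdeg hlt))
  have hP : p = C (p.coeff q) * X ^ q := by
    ext n
    rw [coeff_C_mul, coeff_X_pow]
    rcases eq_or_ne n q with h | h
    · subst h; simp
    · rw [hcm n h, if_neg h, mul_zero]
  intro x
  have hx := heval x
  have h0' := heval 0
  rw [hP] at hx h0'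
  rw [eval_mul, eval_C, eval_pow, eval_X] at hx h0'
  have hxe := Complex.exp_ne_zero (2 * (π:ℂ) * Complex.I * (x:ℂ) / (q:ℂ))
  have h0e := Complex.exp_ne_zero (2 * (π:ℂ) * Complex.I * ((0:ℝ):ℂ) / (q:ℂ))
  have hfx : f x = p.coeff q := mul_left_cancel₀ (pow_ne_zero q hxe)
    (by linear_combination -hx)
  have hf0 : f 0 = p.coeff q := mul_left_cancel₀ (pow_ne_zero q h0e)
    (by linear_combination -h0')
  rw [hfx, hf0]

lemma prod_neg_pow {q : ℕ} (hq : 3 ≤ q) (ξ : ℂ) (hξq : ξ ^ q = 1)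
    (hhalf : ∀ m : ℕ, q = 2 * m → ξ ^ m = -1) :
    (∏ k : Fin q, (-(ξ ^ (k : ℕ)))) = -1 := by
  have hprod : (∏ k : Fin q, (-(ξ ^ (k : ℕ)))) = (-1 : ℂ) ^ q * ξ ^ (∑ i ∈ Finset.range q, i) := by
    rw [Fin.prod_univ_eq_prod_range (fun i => -(ξ ^ i)) q]
    rw [show (fun i => -(ξ ^ i)) = fun i => (-1 : ℂ) * ξ ^ i from by funext i; ring]
    rw [Finset.prod_mul_distrib, Finset.prod_const, Finset.card_range,
      Finset.prod_pow_eq_pow_sum]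
  rw [hprod]
  have hgauss : (∑ i ∈ Finset.range q, i) * 2 = q * (q - 1) := Finset.sum_range_id_mul_two q
  rcases Nat.even_or_odd q with ⟨m, hm⟩ | ⟨m, hm⟩
  · -- q = m + m
    have hm2 : q = 2 * m := by omega
    have ht : (∑ i ∈ Finset.range q, i) = m * (q - 1) := by
      have : (m * (q - 1)) * 2 = q * (q - 1) := by rw [hm2]; ring
      omega
    rw [ht, pow_mul, hhalf m hm2]
    have hodd : Odd (q - 1) := by
      refine ⟨m - 1, by omega⟩
    have heven : Even q := ⟨m, hm⟩
    rw [heven.neg_one_pow, hodd.neg_one_pow]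
    ring
  · -- q = 2m + 1
    have ht : (∑ i ∈ Finset.range q, i) = q * m := by
      have : (q * m) * 2 = q * (q - 1) := by
        have : q - 1 = 2 * m := by omega
        rw [this]; ring
      omega
    rw [ht, pow_mul, hξq, one_pow, mul_one]
    have hodd : Odd q := ⟨m, by omega⟩
    exact hodd.neg_one_pow

lemma zeta_half {q : ℕ} (hq : 3 ≤ q) :
    ∀ m : ℕ, q = 2 * m → (Complex.exp (2 * (π:ℂ) * Complex.I / (q:ℂ))) ^ m = -1 := by
  intro m hm
  rw [← Complex.exp_nat_mul]
  have hm0 : (m:ℂ) ≠ 0 := by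
    have : m ≠ 0 := by omega
    exact_mod_cast this
  have : (m:ℂ) * (2 * (π:ℂ) * Complex.I / (q:ℂ)) = (π:ℂ) * Complex.I := by
    have hq' : (q:ℂ) = 2 * m := by exact_mod_cast hm
    rw [hq']
    field_simp
  rw [this, Complex.exp_pi_mul_I]

lemma prod_neg_zeta {q : ℕ} (hq : 3 ≤ q) :
    (∏ k : Fin q, (-((Complex.exp (2 * (π:ℂ) * Complex.I / (q:ℂ))) ^ (k : ℕ)))) = -1 := by
  have hζ : IsPrimitiveRoot (Complex.exp (2 * (π:ℂ) * Complex.I / (q:ℂ))) q :=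
    Complex.isPrimitiveRoot_exp q (by omega)
  exact prod_neg_pow hq _ hζ.pow_eq_one (zeta_half hq)

lemma prod_neg_zeta_inv {q : ℕ} (hq : 3 ≤ q) :
    (∏ k : Fin q, (-((Complex.exp (2 * (π:ℂ) * Complex.I / (q:ℂ)))⁻¹ ^ (k : ℕ)))) = -1 := by
  have hζ : IsPrimitiveRoot (Complex.exp (2 * (π:ℂ) * Complex.I / (q:ℂ))) q :=
    Complex.isPrimitiveRoot_exp q (by omega)
  apply prod_neg_pow hq
  · rw [inv_pow, hζ.pow_eq_one, inv_one]
  · intro m hm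
    rw [inv_pow, zeta_half hq m hm]
    norm_num

lemma det_shift {q : ℕ} (hq : 3 ≤ q) (E : ℂ) (x₂ x₃ : ℝ) :
    Matrix.det (E • (1 : Matrix (Fin q) (Fin q) ℂ) - harperMatrix q (x₂ + 1) x₃) =
      Matrix.det (E • (1 : Matrix (Fin q) (Fin q) ℂ) - harperMatrix q x₂ x₃) := by
  obtain ⟨n, rfl⟩ : ∃ n, q = n + 1 := ⟨q - 1, by omega⟩
  set q := n + 1
  have hq0 : (q:ℝ) ≠ 0 := by positivity
  rw [← Matrix.det_submatrix_equiv_self (Equiv.addRight (1 : Fin q))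
    (E • (1 : Matrix (Fin q) (Fin q) ℂ) - harperMatrix q x₂ x₃)]
  congr 1
  ext k l
  rw [Matrix.submatrix_apply, Equiv.coe_addRight, Matrix.sub_apply, Matrix.sub_apply,
    Matrix.smul_apply, Matrix.smul_apply, Matrix.one_apply, Matrix.one_apply]
  have hkl : (k + 1 = l + 1) ↔ (k = l) := by
    constructor
    · exact fun h => add_right_cancel h
    · exact fun h => by rw [h]
  rw [harper_apply hq, harper_apply hq]
  have hc2 : (k + 1 = l + 1 + 1) ↔ (k = l + 1) := by
    constructor
    · exact fun h => add_right_cancel h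
    · exact fun h => by rw [h]
  have hc3 : (l + 1 = k + 1 + 1) ↔ (l = k + 1) := by
    constructor
    · exact fun h => add_right_cancel h
    · exact fun h => by rw [h]
  simp only [show ∀ i : Fin q, finRotate q i = i + 1 from fun i => finRotate_succ_apply i, hkl, hc2, hc3]
  have hdiag : ((2 * Real.cos (2 * π * ((x₂ + 1) + ((k:ℕ):ℝ)) / q) : ℝ) : ℂ)
      = ((2 * Real.cos (2 * π * (x₂ + (((k+1 : Fin q):ℕ):ℝ)) / q) : ℝ) : ℂ) := by
    have hval : ((k + 1 : Fin q) : ℕ) = ((k:ℕ) + 1) % q := by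
      rw [Fin.val_add, Fin.val_one']
      congr 1
      rw [Nat.mod_eq_of_lt (by omega)]
    rcases Nat.lt_or_ge ((k:ℕ) + 1) q with h | h
    · rw [hval, Nat.mod_eq_of_lt h]
      congr 2
      push_cast
      ring
    · have hk : (k:ℕ) = q - 1 := by have := k.isLt; omega
      have hval0 : ((k + 1 : Fin q) : ℕ) = 0 := by
        rw [hval, hk]
        have : q - 1 + 1 = q := by omega
        rw [this, Nat.mod_self]
      rw [hval0]
      have harg : 2 * π * (x₂ + 1 + ((k:ℕ):ℝ)) / q = 2 * π * (x₂ + ((0:ℕ):ℝ)) / q + 2 * π := by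
        rw [hk]
        push_cast [Nat.cast_sub (by omega : 1 ≤ q)]
        field_simp
        ring
      rw [harg, Real.cos_add_two_pi]
  rw [hdiag]

lemma det_gauge {q : ℕ} (hq : 3 ≤ q) (E : ℂ) (x₂ x₃ : ℝ) :
    Matrix.det (E • (1 : Matrix (Fin q) (Fin q) ℂ) - harperMatrix q x₂ (x₃ + 1)) =
      Matrix.det (E • (1 : Matrix (Fin q) (Fin q) ℂ) - harperMatrix q x₂ x₃) := by
  obtain ⟨n, rfl⟩ : ∃ n, q = n + 1 := ⟨q - 1, by omega⟩
  set q := n + 1 with hqdef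
  have hqC : (q:ℂ) ≠ 0 := by exact_mod_cast (by omega : q ≠ 0)
  set ζ : ℂ := Complex.exp (2 * (π:ℂ) * Complex.I / (q:ℂ)) with hζdef
  have hζ0 : ζ ≠ 0 := Complex.exp_ne_zero _
  have hζq : ζ ^ q = 1 := (Complex.isPrimitiveRoot_exp q (by omega)).pow_eq_one
  have hpowmod : ∀ a : ℕ, ζ ^ (a % q) = ζ ^ a := by
    intro a
    conv_rhs => rw [← Nat.div_add_mod a q]
    rw [pow_add, pow_mul, hζq, one_pow, one_mul]
  set D : Matrix (Fin q) (Fin q) ℂ := Matrix.diagonal (fun k : Fin q => ζ ^ (k:ℕ)) with hDdef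
  have hdetD : D.det = ∏ k : Fin q, ζ ^ (k:ℕ) := Matrix.det_diagonal
  have hdet0 : D.det ≠ 0 := by
    rw [hdetD]
    exact Finset.prod_ne_zero_iff.mpr fun k _ => pow_ne_zero _ hζ0
  set Dinv : Matrix (Fin q) (Fin q) ℂ := Matrix.diagonal (fun k : Fin q => (ζ ^ (k:ℕ))⁻¹)
    with hDinvdef
  have hconj : ∀ N : Matrix (Fin q) (Fin q) ℂ, (D * N * Dinv).det = N.det := by
    intro N
    rw [Matrix.det_mul, Matrix.det_mul, hDdef, hDinvdef, Matrix.det_diagonal,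
      Matrix.det_diagonal]
    have : (∏ k : Fin q, ζ ^ (k:ℕ)) * (∏ k : Fin q, (ζ ^ (k:ℕ))⁻¹) = 1 := by
      rw [← Finset.prod_mul_distrib]
      apply Finset.prod_eq_one
      intro k _
      exact mul_inv_cancel₀ (pow_ne_zero _ hζ0)
    calc (∏ k : Fin q, ζ ^ (k:ℕ)) * N.det * ∏ k : Fin q, (ζ ^ (k:ℕ))⁻¹
        = ((∏ k : Fin q, ζ ^ (k:ℕ)) * (∏ k : Fin q, (ζ ^ (k:ℕ))⁻¹)) * N.det := by ring
      _ = N.det := by rw [this, one_mul]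
  rw [← hconj (E • (1 : Matrix (Fin q) (Fin q) ℂ) - harperMatrix q x₂ x₃)]
  congr 1
  rw [hDdef, hDinvdef]
  ext k l
  rw [Matrix.mul_diagonal, Matrix.diagonal_mul]
  simp only [Matrix.sub_apply, Matrix.smul_apply, Matrix.one_apply, smul_eq_mul]
  rw [harper_apply hq, harper_apply hq]
  rcases eq_or_ne k l with hkl | hkl
  · subst hkl
    simp only [if_pos rfl]
    field_simp
    simp
  · rcases eq_or_ne k (finRotate q l) with hc2 | hc2
    · simp only [if_neg hkl, if_pos hc2, mul_zero, zero_sub]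
      have hkval : (k:ℕ) = ((l:ℕ) + 1) % q := by
        rw [hc2, finRotate_succ_apply, Fin.val_add, Fin.val_one']
        congr 1
        rw [Nat.mod_eq_of_lt (by omega)]
      rw [hkval, hpowmod, pow_succ]
      have : Complex.exp (2 * (π:ℂ) * Complex.I * ((x₃:ℝ) + 1 : ℝ) / (q:ℂ))
          = ζ * Complex.exp (2 * (π:ℂ) * Complex.I * (x₃:ℂ) / (q:ℂ)) := by
        rw [hζdef, ← Complex.exp_add]
        congr 1
        push_cast
        ring
      rw [this]
      have hζl : (ζ ^ (l:ℕ)) ≠ 0 := pow_ne_zero _ hζ0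
      field_simp
    · rcases eq_or_ne l (finRotate q k) with hc3 | hc3
      · simp only [if_neg hkl, if_neg hc2, if_pos hc3, mul_zero, zero_sub]
        have hlval : (l:ℕ) = ((k:ℕ) + 1) % q := by
          rw [hc3, finRotate_succ_apply, Fin.val_add, Fin.val_one']
          congr 1
          rw [Nat.mod_eq_of_lt (by omega)]
        rw [hlval, hpowmod, pow_succ]
        have : Complex.exp (-(2 * (π:ℂ) * Complex.I * ((x₃:ℝ) + 1 : ℝ) / (q:ℂ)))
            = ζ⁻¹ * Complex.exp (-(2 * (π:ℂ) * Complex.I * (x₃:ℂ) / (q:ℂ))) := by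
          rw [hζdef, ← Complex.exp_neg, ← Complex.exp_add]
          congr 1
          push_cast
          ring
        rw [this]
        have hζk : (ζ ^ (k:ℕ)) ≠ 0 := pow_ne_zero _ hζ0
        field_simp
      · simp only [if_neg hkl, if_neg hc2, if_neg hc3, mul_zero, zero_sub]
        ring

/-- two-cosine as sum of exponentials -/
lemma two_cos_eq (x : ℝ) :
    ((2 * Real.cos (2 * π * x) : ℝ) : ℂ)
      = Complex.exp (2 * (π:ℂ) * Complex.I * (x:ℂ))
        + Complex.exp (-(2 * (π:ℂ) * Complex.I * (x:ℂ))) := by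
  push_cast [Complex.ofReal_cos]
  rw [Complex.two_cos]
  congr 1
  · congr 1; ring
  · congr 1; ring

/-- e(x)^q = exp(2πix) -/
lemma exp_pow_q {q : ℕ} (hq : 0 < q) (x : ℝ) :
    Complex.exp (2 * (π:ℂ) * Complex.I * (x:ℂ) / (q:ℂ)) ^ q
      = Complex.exp (2 * (π:ℂ) * Complex.I * (x:ℂ)) := by
  rw [← Complex.exp_nat_mul]
  congr 1
  have hqC : (q:ℂ) ≠ 0 := by exact_mod_cast hq.ne'
  field_simp

noncomputable def Q3 (q : ℕ) (d : Fin q → ℂ) : Matrix (Fin q) (Fin q) (Polynomial ℂ) :=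
  fun k l =>
    if k = l then C (d k) * X
    else if k = finRotate q l then C (-1) * X ^ 2
    else if l = finRotate q k then C (-1)
    else 0

lemma Q3_natDegree_le (q : ℕ) (d : Fin q → ℂ) (k l : Fin q) : (Q3 q d k l).natDegree ≤ 2 := by
  unfold Q3
  split_ifs
  · exact (natDegree_C_mul_le _ _).trans (by simp)
  · exact (natDegree_C_mul_le _ _).trans (by simp)
  · simp
  · simp

lemma Q3_natDegree_le_one (q : ℕ) (d : Fin q → ℂ) (k l : Fin q) (h : k ≠ finRotate q l) :
    (Q3 q d k l).natDegree ≤ 1 := by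
  unfold Q3
  rw [if_neg h]
  split_ifs
  · exact (natDegree_C_mul_le _ _).trans (by simp)
  · simp
  · simp

lemma Q3_map_eval {q : ℕ} (hq : 3 ≤ q) (E : ℂ) (x₂ x₃ : ℝ) :
    (Q3 q (fun k => E - ((2 * Real.cos (2 * π * (x₂ + (k : ℕ)) / q) : ℝ) : ℂ))).map
        (evalRingHom (Complex.exp (2 * (π:ℂ) * Complex.I * (x₃:ℂ) / (q:ℂ))))
      = Complex.exp (2 * (π:ℂ) * Complex.I * (x₃:ℂ) / (q:ℂ))
          • (E • (1 : Matrix (Fin q) (Fin q) ℂ) - harperMatrix q x₂ x₃) := by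
  set v : ℂ := Complex.exp (2 * (π:ℂ) * Complex.I * (x₃:ℂ) / (q:ℂ)) with hvdef
  have hv0 : v ≠ 0 := Complex.exp_ne_zero _
  ext k l
  rw [Matrix.map_apply, Matrix.smul_apply, Matrix.sub_apply, Matrix.smul_apply,
    Matrix.one_apply, harper_apply hq]
  unfold Q3
  simp only [coe_evalRingHom]
  rcases eq_or_ne k l with h1 | h1
  · subst h1
    simp only [if_pos rfl, eq_self_iff_true, if_true]
    rw [eval_mul, eval_C, eval_X]
    rw [smul_eq_mul, smul_eq_mul]
    ring
  · rcases eq_or_ne k (finRotate q l) with h2 | h2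
    · simp only [if_neg h1, if_pos h2]
      rw [eval_mul, eval_C, eval_pow, eval_X]
      rw [smul_eq_mul, smul_eq_mul]
      ring
    · rcases eq_or_ne l (finRotate q k) with h3 | h3
      · simp only [if_neg h1, if_neg h2, if_pos h3]
        rw [eval_C]
        rw [smul_eq_mul, smul_eq_mul]
        rw [Complex.exp_neg]
        rw [← hvdef, mul_zero, zero_sub, mul_neg, mul_inv_cancel₀ hv0]
      · simp only [if_neg h1, if_neg h2, if_neg h3]
        rw [eval_zero]
        rw [smul_eq_mul, smul_eq_mul]
        ring

lemma det_natDegree_le {q : ℕ} (M : Matrix (Fin q) (Fin q) (Polynomial ℂ))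
    (h : ∀ k l, (M k l).natDegree ≤ 2) : (M.det).natDegree ≤ 2 * q := by
  rw [Matrix.det_apply']
  apply natDegree_sum_le_of_forall_le
  intro σ _
  rw [← C_eq_intCast]
  refine (natDegree_C_mul_le _ _).trans ?_
  refine (natDegree_prod_le _ _).trans ?_
  calc ∑ i : Fin q, (M (σ i) i).natDegree ≤ (Finset.univ : Finset (Fin q)).card • 2 :=
        Finset.sum_le_card_nsmul _ _ 2 (fun i _ => h (σ i) i)
    _ = 2 * q := by simp [mul_comm]

lemma Q3_det_coeff_2q {q : ℕ} (hq : 3 ≤ q) (d : Fin q → ℂ) :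
    ((Q3 q d).det).coeff (2 * q) = -1 := by
  obtain ⟨n, rfl⟩ : ∃ n, q = n + 1 := ⟨q - 1, by omega⟩
  rw [Matrix.det_apply', Polynomial.finset_sum_coeff]
  rw [Finset.sum_eq_single (finRotate (n + 1))]
  · have hterm : ∀ i : Fin (n+1), Q3 (n+1) d (finRotate (n+1) i) i = C (-1) * X ^ 2 := by
      intro i
      unfold Q3
      rw [if_neg (rot_ne_self hq i), if_pos rfl]
    rw [Finset.prod_congr rfl (fun i _ => hterm i), Finset.prod_const, Finset.card_univ,
      Fintype.card_fin, mul_pow, ← C_pow, ← pow_mul]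
    rw [← C_eq_intCast, coeff_C_mul, coeff_C_mul, coeff_X_pow, if_pos rfl, mul_one]
    rw [sign_finRotate]
    push_cast
    rw [← pow_add]
    exact Odd.neg_one_pow ⟨n, by ring⟩
  · intro σ _ hσ
    rw [← C_eq_intCast, coeff_C_mul]
    have hcoeff : (∏ i : Fin (n+1), Q3 (n+1) d (σ i) i).coeff (2 * (n+1)) = 0 := by
      apply coeff_eq_zero_of_natDegree_lt
      have hex : ∃ i, σ i ≠ finRotate (n+1) i := by
        by_contra hc
        push_neg at hc
        exact hσ (Equiv.ext hc)
      obtain ⟨i₀, hi₀⟩ := hex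
      calc (∏ i : Fin (n+1), Q3 (n+1) d (σ i) i).natDegree
          ≤ ∑ i : Fin (n+1), (Q3 (n+1) d (σ i) i).natDegree := natDegree_prod_le _ _
        _ = (Q3 (n+1) d (σ i₀) i₀).natDegree
            + ∑ i ∈ Finset.univ.erase i₀, (Q3 (n+1) d (σ i) i).natDegree :=
              (Finset.add_sum_erase _ _ (Finset.mem_univ i₀)).symm
        _ ≤ 1 + (Finset.univ.erase i₀).card • 2 := by
            gcongr
            · exact Q3_natDegree_le_one _ _ _ _ hi₀
            · exact Finset.sum_le_card_nsmul _ _ 2 (fun i _ => Q3_natDegree_le _ _ _ _)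
        _ < 2 * (n + 1) := by
            rw [Finset.card_erase_of_mem (Finset.mem_univ i₀), Finset.card_univ,
              Fintype.card_fin, smul_eq_mul]
            omega
    rw [hcoeff, mul_zero]
  · intro h
    exact absurd (Finset.mem_univ _) h

lemma Q3_det_coeff_zero {q : ℕ} (hq : 3 ≤ q) (d : Fin q → ℂ) :
    ((Q3 q d).det).coeff 0 = -1 := by
  obtain ⟨n, rfl⟩ : ∃ n, q = n + 1 := ⟨q - 1, by omega⟩
  rw [coeff_zero_eq_eval_zero]
  have h1 : eval 0 ((Q3 (n+1) d).det) = ((Q3 (n+1) d).map (evalRingHom 0)).det := by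
    have := RingHom.map_det (evalRingHom (0:ℂ)) (Q3 (n+1) d)
    rw [coe_evalRingHom] at this
    exact this
  rw [h1]
  have h2 : (Q3 (n+1) d).map (evalRingHom 0)
      = (-1 : ℂ) • ((finRotate (n+1)).permMatrix ℂ) := by
    ext k l
    rw [Matrix.map_apply, Matrix.smul_apply]
    simp only [Equiv.Perm.permMatrix, PEquiv.toMatrix_apply, Equiv.toPEquiv_apply,
      Option.mem_def, Option.some.injEq, coe_evalRingHom]
    unfold Q3
    rcases eq_or_ne k l with hh1 | hh1
    · subst hh1
      rw [if_pos rfl, eval_mul, eval_C, eval_X, mul_zero,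
        if_neg (fun h => rot_ne_self hq k h), smul_zero]
    · rcases eq_or_ne k (finRotate (n+1) l) with hh2 | hh2
      · rw [if_neg hh1, if_pos hh2, eval_mul, eval_C, eval_pow, eval_X]
        have : finRotate (n+1) k ≠ l := by
          rw [hh2]
          exact fun h => rot_rot_ne hq l h
        rw [if_neg this, smul_zero]
        ring
      · rcases eq_or_ne l (finRotate (n+1) k) with hh3 | hh3
        · rw [if_neg hh1, if_neg hh2, if_pos hh3, eval_C, if_pos hh3.symm]
          simp
        · rw [if_neg hh1, if_neg hh2, if_neg hh3, eval_zero,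
            if_neg (fun h => hh3 h.symm), smul_zero]
  rw [h2, Matrix.det_smul, Matrix.det_permutation, sign_finRotate]
  push_cast [Fintype.card_fin]
  rw [← pow_add]
  exact Odd.neg_one_pow ⟨n, by ring⟩

lemma const_x3 {q : ℕ} (hq : 3 ≤ q) (E : ℂ) (x₂ : ℝ) (x₃ : ℝ) :
    Matrix.det (E • (1 : Matrix (Fin q) (Fin q) ℂ) - harperMatrix q x₂ x₃)
        + ((2 * Real.cos (2 * π * x₃) : ℝ) : ℂ)
      = Matrix.det (E • (1 : Matrix (Fin q) (Fin q) ℂ) - harperMatrix q x₂ 0) + 2 := by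
  have hq0 : 0 < q := by omega
  set d : Fin q → ℂ := fun k => E - ((2 * Real.cos (2 * π * (x₂ + (k : ℕ)) / q) : ℝ) : ℂ)
    with hddef
  set p : ℂ[X] := (Q3 q d).det + X ^ (2 * q) + C 1 with hpdef
  have hkey := key_const hq0
    (fun x => Matrix.det (E • (1 : Matrix (Fin q) (Fin q) ℂ) - harperMatrix q x₂ x)
      + ((2 * Real.cos (2 * π * x) : ℝ) : ℂ)) p ?_ ?_ ?_ ?_ ?_
  · have h1 := hkey x₃
    rw [h1]
    norm_num
  · -- natDegree
    rw [hpdef]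
    refine (natDegree_add_le _ _).trans ?_
    refine max_le ((natDegree_add_le _ _).trans (max_le ?_ ?_)) ?_
    · exact det_natDegree_le _ (fun k l => Q3_natDegree_le q d k l)
    · rw [natDegree_X_pow]
    · rw [natDegree_C]; omega
  · -- coeff 0
    rw [hpdef]
    rw [coeff_add, coeff_add, Q3_det_coeff_zero hq d, coeff_X_pow, coeff_C]
    have h2q0 : 2 * q ≠ 0 := by omega
    rw [if_neg (fun h => h2q0 h.symm), if_pos rfl]
    ring
  · -- coeff 2q
    rw [hpdef]
    rw [coeff_add, coeff_add, Q3_det_coeff_2q hq d, coeff_X_pow, coeff_C]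
    have h2q0 : 2 * q ≠ 0 := by omega
    rw [if_pos rfl, if_neg h2q0]
    ring
  · -- heval
    intro x
    set v : ℂ := Complex.exp (2 * (π:ℂ) * Complex.I * (x:ℂ) / (q:ℂ)) with hvdef
    have hv0 : v ≠ 0 := Complex.exp_ne_zero _
    rw [hpdef, eval_add, eval_add, eval_pow, eval_X, eval_C]
    have hdet : eval v ((Q3 q d).det)
        = v ^ q * Matrix.det (E • (1 : Matrix (Fin q) (Fin q) ℂ) - harperMatrix q x₂ x) := by
      have hmapdet := RingHom.map_det (evalRingHom v) (Q3 q d)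
      rw [coe_evalRingHom] at hmapdet
      rw [hmapdet]
      have := Q3_map_eval hq E x₂ x
      rw [← hvdef] at this
      rw [show (RingHom.mapMatrix (evalRingHom v)) (Q3 q d) = (Q3 q d).map (evalRingHom v) from rfl]
      rw [this, Matrix.det_smul, Fintype.card_fin]
    rw [hdet]
    have hvq : v ^ q = Complex.exp (2 * (π:ℂ) * Complex.I * (x:ℂ)) := exp_pow_q hq0 x
    have hcos := two_cos_eq x
    have hv2q : v ^ (2 * q) = v ^ q * v ^ q := by rw [two_mul, pow_add]
    have hinv : Complex.exp (2 * (π:ℂ) * Complex.I * (x:ℂ))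
        * Complex.exp (-(2 * (π:ℂ) * Complex.I * (x:ℂ))) = 1 := by
      rw [← Complex.exp_add]
      simp
    rw [hcos, hv2q, hvq]
    linear_combination -hinv
  · -- periodicity
    intro x
    rw [det_gauge hq E x₂ x]
    have : 2 * π * (x + 1) = 2 * π * x + 2 * π := by ring
    rw [this, Real.cos_add_two_pi]

noncomputable def Q2 (q : ℕ) (E u z : ℂ) : Matrix (Fin q) (Fin q) (Polynomial ℂ) :=
  fun k l =>
    if k = l then C (-(z ^ (k:ℕ))) * X ^ 2 + C E * X + C (-(z⁻¹ ^ (k:ℕ)))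
    else if k = finRotate q l then C (-u) * X
    else if l = finRotate q k then C (-u⁻¹) * X
    else 0

lemma Q2_natDegree_le (q : ℕ) (E u z : ℂ) (k l : Fin q) : (Q2 q E u z k l).natDegree ≤ 2 := by
  unfold Q2
  split_ifs
  · exact natDegree_quadratic_le
  · exact (natDegree_C_mul_le _ _).trans (by simp)
  · exact (natDegree_C_mul_le _ _).trans (by simp)
  · simp

lemma Q2_natDegree_le_one (q : ℕ) (E u z : ℂ) (k l : Fin q) (h : k ≠ l) :
    (Q2 q E u z k l).natDegree ≤ 1 := by
  unfold Q2
  rw [if_neg h]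
  split_ifs
  · exact (natDegree_C_mul_le _ _).trans (by simp)
  · exact (natDegree_C_mul_le _ _).trans (by simp)
  · simp

lemma Q2_map_eval {q : ℕ} (hq : 3 ≤ q) (E : ℂ) (x₂ x₃ : ℝ) :
    (Q2 q E (Complex.exp (2 * (π:ℂ) * Complex.I * (x₃:ℂ) / (q:ℂ)))
        (Complex.exp (2 * (π:ℂ) * Complex.I / (q:ℂ)))).map
        (evalRingHom (Complex.exp (2 * (π:ℂ) * Complex.I * (x₂:ℂ) / (q:ℂ))))
      = Complex.exp (2 * (π:ℂ) * Complex.I * (x₂:ℂ) / (q:ℂ))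
          • (E • (1 : Matrix (Fin q) (Fin q) ℂ) - harperMatrix q x₂ x₃) := by
  have hqC : (q:ℂ) ≠ 0 := by
    have : q ≠ 0 := by omega
    exact_mod_cast this
  set w : ℂ := Complex.exp (2 * (π:ℂ) * Complex.I * (x₂:ℂ) / (q:ℂ)) with hwdef
  set u : ℂ := Complex.exp (2 * (π:ℂ) * Complex.I * (x₃:ℂ) / (q:ℂ)) with hudef
  set z : ℂ := Complex.exp (2 * (π:ℂ) * Complex.I / (q:ℂ)) with hzdef
  have hw0 : w ≠ 0 := Complex.exp_ne_zero _
  have hz0 : z ≠ 0 := Complex.exp_ne_zero _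
  ext k l
  rw [Matrix.map_apply, Matrix.smul_apply, Matrix.sub_apply, Matrix.smul_apply,
    Matrix.one_apply, harper_apply hq]
  simp only [coe_evalRingHom]
  unfold Q2
  rcases eq_or_ne k l with h1 | h1
  · subst h1
    simp only [if_pos rfl, eq_self_iff_true, if_true]
    rw [eval_add, eval_add, eval_mul, eval_mul, eval_C, eval_C, eval_C, eval_pow, eval_X]
    have hck : ((2 * Real.cos (2 * π * (x₂ + (k:ℕ)) / q) : ℝ) : ℂ)
        = z ^ (k:ℕ) * w + (z ^ (k:ℕ) * w)⁻¹ := by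
      have harg : 2 * π * (x₂ + (k:ℕ)) / q = 2 * π * ((x₂ + (k:ℕ)) / q : ℝ) := by ring
      rw [harg, two_cos_eq]
      have hzw : z ^ (k:ℕ) * w
          = Complex.exp (2 * (π:ℂ) * Complex.I * (((x₂ + (k:ℕ)) / q : ℝ) : ℂ)) := by
        rw [hzdef, hwdef, ← Complex.exp_nat_mul, ← Complex.exp_add]
        congr 1
        push_cast
        field_simp
        ring
      rw [hzw, ← Complex.exp_neg]
    rw [hck]
    have hzk : z ^ (k:ℕ) ≠ 0 := pow_ne_zero _ hz0
    rw [smul_eq_mul, smul_eq_mul, inv_pow]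
    field_simp
    ring
  · rcases eq_or_ne k (finRotate q l) with h2 | h2
    · simp only [if_neg h1, if_pos h2]
      rw [eval_mul, eval_C, eval_X, smul_eq_mul, smul_eq_mul]
      ring
    · rcases eq_or_ne l (finRotate q k) with h3 | h3
      · simp only [if_neg h1, if_neg h2, if_pos h3]
        rw [eval_mul, eval_C, eval_X, smul_eq_mul, smul_eq_mul, Complex.exp_neg]
        ring
      · simp only [if_neg h1, if_neg h2, if_neg h3]
        rw [eval_zero, smul_eq_mul, smul_eq_mul]
        ring

lemma Q2_diag_coeff_two (q : ℕ) (E u z : ℂ) (k : Fin q) :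
    (Q2 q E u z k k).coeff 2 = -(z ^ (k:ℕ)) := by
  unfold Q2
  rw [if_pos rfl]
  rw [coeff_add, coeff_add, coeff_C_mul, coeff_C_mul, coeff_X_pow, coeff_C]
  norm_num
  rw [coeff_X]
  norm_num

lemma Q2_det_coeff_2q {q : ℕ} (hq : 3 ≤ q) (E u : ℂ) :
    ((Q2 q E u (Complex.exp (2 * (π:ℂ) * Complex.I / (q:ℂ)))).det).coeff (2 * q) = -1 := by
  set z : ℂ := Complex.exp (2 * (π:ℂ) * Complex.I / (q:ℂ)) with hzdef
  rw [Matrix.det_apply', Polynomial.finset_sum_coeff]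
  rw [Finset.sum_eq_single 1]
  · simp only [Equiv.Perm.sign_one, Units.val_one, Int.cast_one, one_mul, Equiv.Perm.one_apply]
    have h2q : 2 * q = (Finset.univ : Finset (Fin q)).card * 2 := by
      simp [mul_comm]
    rw [h2q, coeff_prod_of_natDegree_le _ _ _ (fun k _ => Q2_natDegree_le q E u z k k)]
    rw [Finset.prod_congr rfl (fun k _ => Q2_diag_coeff_two q E u z k)]
    exact prod_neg_zeta hq
  · intro σ _ hσ
    rw [← C_eq_intCast, coeff_C_mul]
    have hcoeff : (∏ i : Fin q, Q2 q E u z (σ i) i).coeff (2 * q) = 0 := by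
      apply coeff_eq_zero_of_natDegree_lt
      have hex : ∃ i, σ i ≠ i := by
        by_contra hc
        push_neg at hc
        exact hσ (Equiv.ext hc)
      obtain ⟨i₀, hi₀⟩ := hex
      calc (∏ i : Fin q, Q2 q E u z (σ i) i).natDegree
          ≤ ∑ i : Fin q, (Q2 q E u z (σ i) i).natDegree := natDegree_prod_le _ _
        _ = (Q2 q E u z (σ i₀) i₀).natDegree
            + ∑ i ∈ Finset.univ.erase i₀, (Q2 q E u z (σ i) i).natDegree :=
              (Finset.add_sum_erase _ _ (Finset.mem_univ i₀)).symm
        _ ≤ 1 + (Finset.univ.erase i₀).card • 2 := by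
            gcongr
            · exact Q2_natDegree_le_one _ _ _ _ _ _ hi₀
            · exact Finset.sum_le_card_nsmul _ _ 2 (fun i _ => Q2_natDegree_le _ _ _ _ _ _)
        _ < 2 * q := by
            rw [Finset.card_erase_of_mem (Finset.mem_univ i₀), Finset.card_univ,
              Fintype.card_fin, smul_eq_mul]
            omega
    rw [hcoeff, mul_zero]
  · intro h
    exact absurd (Finset.mem_univ _) h

lemma Q2_det_coeff_zero {q : ℕ} (hq : 3 ≤ q) (E u : ℂ) :
    ((Q2 q E u (Complex.exp (2 * (π:ℂ) * Complex.I / (q:ℂ)))).det).coeff 0 = -1 := by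
  set z : ℂ := Complex.exp (2 * (π:ℂ) * Complex.I / (q:ℂ)) with hzdef
  rw [coeff_zero_eq_eval_zero]
  have h1 : eval 0 ((Q2 q E u z).det) = ((Q2 q E u z).map (evalRingHom 0)).det := by
    have := RingHom.map_det (evalRingHom (0:ℂ)) (Q2 q E u z)
    rw [coe_evalRingHom] at this
    exact this
  rw [h1]
  have h2 : (Q2 q E u z).map (evalRingHom 0)
      = Matrix.diagonal (fun k : Fin q => -(z⁻¹ ^ (k:ℕ))) := by
    ext k l
    rw [Matrix.map_apply, Matrix.diagonal]
    simp only [coe_evalRingHom, Matrix.of_apply]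
    unfold Q2
    rcases eq_or_ne k l with hh1 | hh1
    · subst hh1
      rw [if_pos rfl, if_pos rfl]
      rw [eval_add, eval_add, eval_mul, eval_mul, eval_C, eval_C, eval_C, eval_pow, eval_X]
      ring
    · rw [if_neg hh1, if_neg hh1]
      split_ifs
      · rw [eval_mul, eval_C, eval_X, mul_zero]
      · rw [eval_mul, eval_C, eval_X, mul_zero]
      · rw [eval_zero]
  rw [h2, Matrix.det_diagonal]
  exact prod_neg_zeta_inv hq

lemma const_x2 {q : ℕ} (hq : 3 ≤ q) (E : ℂ) (x₃ : ℝ) (x₂ : ℝ) :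
    Matrix.det (E • (1 : Matrix (Fin q) (Fin q) ℂ) - harperMatrix q x₂ x₃)
        + ((2 * Real.cos (2 * π * x₂) : ℝ) : ℂ)
      = Matrix.det (E • (1 : Matrix (Fin q) (Fin q) ℂ) - harperMatrix q 0 x₃) + 2 := by
  have hq0 : 0 < q := by omega
  set u : ℂ := Complex.exp (2 * (π:ℂ) * Complex.I * (x₃:ℂ) / (q:ℂ)) with hudef
  set z : ℂ := Complex.exp (2 * (π:ℂ) * Complex.I / (q:ℂ)) with hzdef
  set p : ℂ[X] := (Q2 q E u z).det + X ^ (2 * q) + C 1 with hpdef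
  have hkey := key_const hq0
    (fun x => Matrix.det (E • (1 : Matrix (Fin q) (Fin q) ℂ) - harperMatrix q x x₃)
      + ((2 * Real.cos (2 * π * x) : ℝ) : ℂ)) p ?_ ?_ ?_ ?_ ?_
  · have h1 := hkey x₂
    rw [h1]
    norm_num
  · rw [hpdef]
    refine (natDegree_add_le _ _).trans ?_
    refine max_le ((natDegree_add_le _ _).trans (max_le ?_ ?_)) ?_
    · exact det_natDegree_le _ (fun k l => Q2_natDegree_le q E u z k l)
    · rw [natDegree_X_pow]
    · rw [natDegree_C]; omega
  · rw [hpdef]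
    rw [coeff_add, coeff_add, Q2_det_coeff_zero hq E u, coeff_X_pow, coeff_C]
    have h2q0 : 2 * q ≠ 0 := by omega
    rw [if_neg (fun h => h2q0 h.symm), if_pos rfl]
    ring
  · rw [hpdef]
    rw [coeff_add, coeff_add, Q2_det_coeff_2q hq E u, coeff_X_pow, coeff_C]
    have h2q0 : 2 * q ≠ 0 := by omega
    rw [if_pos rfl, if_neg h2q0]
    ring
  · intro x
    set w : ℂ := Complex.exp (2 * (π:ℂ) * Complex.I * (x:ℂ) / (q:ℂ)) with hwdef
    have hw0 : w ≠ 0 := Complex.exp_ne_zero _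
    rw [hpdef, eval_add, eval_add, eval_pow, eval_X, eval_C]
    have hdet : eval w ((Q2 q E u z).det)
        = w ^ q * Matrix.det (E • (1 : Matrix (Fin q) (Fin q) ℂ) - harperMatrix q x x₃) := by
      have hmapdet := RingHom.map_det (evalRingHom w) (Q2 q E u z)
      rw [coe_evalRingHom] at hmapdet
      rw [hmapdet]
      have := Q2_map_eval hq E x x₃
      rw [← hudef, ← hzdef, ← hwdef] at this
      rw [show (RingHom.mapMatrix (evalRingHom w)) (Q2 q E u z) = (Q2 q E u z).map (evalRingHom w) from rfl]
      rw [this, Matrix.det_smul, Fintype.card_fin]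
    rw [hdet]
    have hwq : w ^ q = Complex.exp (2 * (π:ℂ) * Complex.I * (x:ℂ)) := exp_pow_q hq0 x
    have hcos := two_cos_eq x
    have hw2q : w ^ (2 * q) = w ^ q * w ^ q := by rw [two_mul, pow_add]
    have hinv : Complex.exp (2 * (π:ℂ) * Complex.I * (x:ℂ))
        * Complex.exp (-(2 * (π:ℂ) * Complex.I * (x:ℂ))) = 1 := by
      rw [← Complex.exp_add]
      simp
    rw [hcos, hw2q, hwq]
    linear_combination -hinv
  · intro x
    rw [det_shift hq E x x₃]
    have : 2 * π * (x + 1) = 2 * π * x + 2 * π := by ring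
    rw [this, Real.cos_add_two_pi]

lemma eigen_iff {q : ℕ} (hq : 3 ≤ q) (A : Matrix (Fin q) (Fin q) ℂ) (E : ℂ) :
    Module.End.HasEigenvalue (Matrix.toLin' A) E ↔
      Matrix.det (E • (1 : Matrix (Fin q) (Fin q) ℂ) - A) = 0 := by
  rw [Module.End.hasEigenvalue_iff_mem_spectrum]
  have h1 : Matrix.toLin' A = Matrix.toLinAlgEquiv' A := rfl
  rw [h1, AlgEquiv.spectrum_eq, spectrum.mem_iff]
  rw [Algebra.algebraMap_eq_smul_one]
  rw [Matrix.isUnit_iff_isUnit_det, isUnit_iff_ne_zero, not_ne_iff]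

end HarperAux

/-- For `q ≥ 3` and all real `x₂, x₃` and `E ∈ ℂ`:
`det(E·I − H_q(x₂,x₃)) = det(E·I − H_q(0,0)) + 4 − 2cos(2πx₂) − 2cos(2πx₃)`; consequently `E`
is an eigenvalue of `H_q(x₂,x₃)` iff `det(E·I − H_q(0,0)) + 4 = 2cos(2πx₂) + 2cos(2πx₃)`. -/
theorem harper_characteristic_polynomial (q : ℕ) (hq : 3 ≤ q) (x₂ x₃ : ℝ) (E : ℂ) :
    (Matrix.det (E • (1 : Matrix (Fin q) (Fin q) ℂ) - harperMatrix q x₂ x₃) =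
      Matrix.det (E • (1 : Matrix (Fin q) (Fin q) ℂ) - harperMatrix q 0 0) + 4 -
        ((2 * Real.cos (2 * π * x₂) : ℝ) : ℂ) - ((2 * Real.cos (2 * π * x₃) : ℝ) : ℂ)) ∧
    (Module.End.HasEigenvalue (Matrix.toLin' (harperMatrix q x₂ x₃)) E ↔
      Matrix.det (E • (1 : Matrix (Fin q) (Fin q) ℂ) - harperMatrix q 0 0) + 4 =
        ((2 * Real.cos (2 * π * x₂) : ℝ) : ℂ) + ((2 * Real.cos (2 * π * x₃) : ℝ) : ℂ)) := by
  have h1 := HarperAux.const_x3 hq E x₂ x₃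
  have h2 := HarperAux.const_x2 hq E 0 x₂
  have hmain : Matrix.det (E • (1 : Matrix (Fin q) (Fin q) ℂ) - harperMatrix q x₂ x₃) =
      Matrix.det (E • (1 : Matrix (Fin q) (Fin q) ℂ) - harperMatrix q 0 0) + 4 -
        ((2 * Real.cos (2 * π * x₂) : ℝ) : ℂ) - ((2 * Real.cos (2 * π * x₃) : ℝ) : ℂ) := by
    linear_combination h1 + h2
  refine ⟨hmain, ?_⟩
  rw [HarperAux.eigen_iff hq, hmain]
  constructor
  · intro h
    linear_combination h
  · intro h
    linear_combination h
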